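/- For real x with |x| < 1, ∑_{n=2}^∞ H_n (ζ(n) − x ζ(n+1)) x^n = ζ(2) x² − γ x + log Γ(1 − x). -/

import Mathlib

/-!
Weierstrass' product for `Γ` gives `log Γ(1 - x) = γ x + ∑_{k ≥ 1} (-log (1 - x/k) - x/k)`.
Expanding each logarithm in powers of `x/k` and summing over `k` first turns this into
`log Γ(1 - x) = γ x + ∑_{n ≥ 2} ζ(n) xⁿ / n`. The series of the theorem is an Abel summation of
this one: with `cₙ = ζ(n) xⁿ`, the sum of `Hₙ (cₙ - cₙ₊₁)` equals `H₂ c₂` plus the sum of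
`(Hₙ₊₁ - Hₙ) cₙ₊₁ = ζ(n+1) xⁿ⁺¹ / (n+1)`.
-/

open Filter Topology Finset Real

/-- `ζ(m)` as a real number; it is junk (`0`) for `m ≤ 1`, where the series diverges. -/
noncomputable def zetaNat (m : ℕ) : ℝ := ∑' k : ℕ, 1 / ((k : ℝ) + 1) ^ m

lemma summable_one_div_nat_add_one_pow {m : ℕ} (hm : 1 < m) :
    Summable fun k : ℕ => 1 / ((k : ℝ) + 1) ^ m := by
  simpa using (summable_nat_add_iff 1).mpr (summable_one_div_nat_pow.mpr hm)

lemma hasSum_zetaNat {m : ℕ} (hm : 1 < m) :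
    HasSum (fun k : ℕ => 1 / ((k : ℝ) + 1) ^ m) (zetaNat m) :=
  (summable_one_div_nat_add_one_pow hm).hasSum

lemma riemannZeta_natCast {m : ℕ} (hm : 1 < m) : riemannZeta m = zetaNat m := by
  rw [zeta_eq_tsum_one_div_nat_add_one_cpow (by simpa using hm), zetaNat, Complex.ofReal_tsum]
  push_cast
  simp [← Complex.cpow_natCast]

lemma zetaNat_le_of_le {m m' : ℕ} (hm : 1 < m) (hmm' : m ≤ m') : zetaNat m' ≤ zetaNat m := by
  refine hasSum_le (fun k => ?_) (hasSum_zetaNat (hm.trans_le hmm')) (hasSum_zetaNat hm)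
  gcongr
  linarith [k.cast_nonneg (α := ℝ)]

lemma zetaNat_nonneg (m : ℕ) : 0 ≤ zetaNat m := tsum_nonneg fun k => by positivity

lemma hasSum_pow_add_two_div {y : ℝ} (hy : |y| < 1) :
    HasSum (fun n : ℕ => y ^ (n + 2) / (n + 2)) (-log (1 - y) - y) := by
  have := (hasSum_nat_add_iff' 1).mpr (Real.hasSum_pow_div_log_of_abs_lt_one hy)
  norm_num at this
  exact this.congr_fun fun n => by ring

theorem HasSum.mul_sub_succ {R : Type*} [Ring R] [TopologicalSpace R] [IsTopologicalAddGroup R]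
    {h c : ℕ → R} {a b : R} (hhc : HasSum (fun n => h n * c n) a)
    (hd : HasSum (fun n => (h (n + 1) - h n) * c (n + 1)) b) :
    HasSum (fun n => h n * (c n - c (n + 1))) (h 0 * c 0 + b) := by
  have hshift : HasSum (fun n => h (n + 1) * c (n + 1)) (a - h 0 * c 0) := by
    simpa using (hasSum_nat_add_iff' 1).mpr hhc
  have := (hhc.sub hshift).add hd
  rw [sub_sub_cancel] at this
  exact this.congr_fun fun n => by noncomm_ring

lemma one_sub_div_nat_add_one_pos {x : ℝ} (hx : x < 1) (k : ℕ) : 0 < 1 - x / (k + 1) := by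
  rw [sub_pos, div_lt_one (by positivity)]
  linarith [k.cast_nonneg (α := ℝ)]

lemma logGammaSeq_one_sub {x : ℝ} (hx : x < 1) (n : ℕ) :
    BohrMollerup.logGammaSeq (1 - x) n =
      (1 - x) * (log n - log (n + 1)) + x * (harmonic (n + 1) - log (n + 1)) -
        ∑ k ∈ range (n + 1), (log (1 - x / (k + 1)) + x / (k + 1)) := by
  have hterm (m : ℕ) : log (1 - x + m) = log (m + 1) + log (1 - x / (m + 1)) := by
    rw [← log_mul (by positivity) (one_sub_div_nat_add_one_pos hx m).ne']
    congr 1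
    field_simp
    ring
  have hfact : ∑ m ∈ range (n + 1), log ((m : ℝ) + 1) = log (n.factorial : ℝ) + log (n + 1) := by
    rw [← log_prod fun m _ => by positivity, prod_range_succ, ← log_mul (by positivity)
      (by positivity)]
    push_cast [← prod_range_add_one_eq_factorial]
    rfl
  have hharm : x * harmonic (n + 1) = ∑ k ∈ range (n + 1), x / ((k : ℝ) + 1) := by
    simp [harmonic, mul_sum, div_eq_mul_inv]
  rw [BohrMollerup.logGammaSeq, sum_congr rfl fun m _ => hterm m, sum_add_distrib, hfact,
    sum_add_distrib, ← hharm]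
  ring

theorem hasSum_log_Gamma_one_sub {x : ℝ} (hx : x < 1) :
    HasSum (fun k : ℕ => -(log (1 - x / (k + 1)) + x / (k + 1)))
      (log (Gamma (1 - x)) - eulerMascheroniConstant * x) := by
  -- The terms are nonnegative, so convergence of the partial sums, which is Euler's limit
  -- formula for `Γ`, already gives an unconditional sum.
  have hnonneg (k : ℕ) : 0 ≤ -(log (1 - x / (k + 1)) + x / (k + 1)) := by
    linarith [log_le_sub_one_of_pos (one_sub_div_nat_add_one_pos hx k)]
  rw [hasSum_iff_tendsto_nat_of_nonneg hnonneg, ← tendsto_add_atTop_iff_nat 1]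
  have hlog : Tendsto (fun n : ℕ => log n - log (n + 1)) atTop (𝓝 0) := by
    simpa using ((tendsto_log_comp_add_sub_log 1).comp tendsto_natCast_atTop_atTop).neg
  have hharm : Tendsto (fun n : ℕ => (harmonic (n + 1) : ℝ) - log (n + 1)) atTop
      (𝓝 eulerMascheroniConstant) := by
    refine (tendsto_harmonic_sub_log.comp (tendsto_add_atTop_nat 1)).congr fun n => ?_
    simp only [Function.comp_apply, Nat.cast_add, Nat.cast_one]
  have hGamma := BohrMollerup.tendsto_log_gamma (sub_pos.mpr hx)
  convert hGamma.sub ((hlog.const_mul (1 - x)).add (hharm.const_mul x)) using 2 with n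
  · rw [logGammaSeq_one_sub hx, sum_neg_distrib]
    ring
  · ring

lemma summable_pow_div_nat_add_one {x : ℝ} (hx : |x| < 1) :
    Summable fun p : ℕ × ℕ => (x / (p.1 + 1)) ^ (p.2 + 2) / (p.2 + 2) := by
  have hbound : Summable fun p : ℕ × ℕ => 1 / ((p.1 : ℝ) + 1) ^ 2 * |x| ^ p.2 :=
    (summable_one_div_nat_add_one_pow one_lt_two).mul_of_nonneg
      (summable_geometric_of_lt_one (abs_nonneg x) hx) (fun _ => by positivity)
      fun _ => by positivity
  refine hbound.of_norm_bounded fun ⟨k, n⟩ => ?_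
  have hk : (1 : ℝ) ≤ k + 1 := by linarith [k.cast_nonneg (α := ℝ)]
  calc ‖(x / (k + 1)) ^ (n + 2) / (n + 2)‖ = (|x| / (k + 1)) ^ (n + 2) / (n + 2) := by
        rw [norm_div, norm_pow, norm_div, Real.norm_of_nonneg (by positivity : (0 : ℝ) ≤ k + 1),
          Real.norm_of_nonneg (by positivity : (0 : ℝ) ≤ n + 2), Real.norm_eq_abs]
    _ ≤ (|x| / (k + 1)) ^ (n + 2) :=
        div_le_self (by positivity) (by linarith [n.cast_nonneg (α := ℝ)])
    _ = |x| ^ 2 / (k + 1) ^ (n + 2) * |x| ^ n := by rw [div_pow]; ring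
    _ ≤ 1 / ((k : ℝ) + 1) ^ 2 * |x| ^ n := by
        gcongr
        · exact pow_le_one₀ (abs_nonneg x) hx.le
        · omega

theorem hasSum_zetaNat_mul_pow_div {x : ℝ} (hx : |x| < 1) :
    HasSum (fun n : ℕ => zetaNat (n + 2) * x ^ (n + 2) / (n + 2))
      (log (Gamma (1 - x)) - eulerMascheroniConstant * x) := by
  -- Sum the double series by rows (`hrow`, Weierstrass) and by columns (`hcol`, zeta values).
  set a : ℕ × ℕ → ℝ := fun p => (x / (p.1 + 1)) ^ (p.2 + 2) / (p.2 + 2)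
  have ha : Summable a := summable_pow_div_nat_add_one hx
  have hrow (k : ℕ) : HasSum (fun n => a (k, n)) (-(log (1 - x / (k + 1)) + x / (k + 1))) := by
    have hxk : |x / (k + 1)| < 1 := by
      rw [abs_div, abs_of_pos (by positivity : (0 : ℝ) < k + 1), div_lt_one (by positivity)]
      linarith [abs_lt.mp hx, k.cast_nonneg (α := ℝ)]
    convert hasSum_pow_add_two_div hxk using 1
    ring
  have hcol (n : ℕ) : HasSum (fun k => a (k, n)) (zetaNat (n + 2) * x ^ (n + 2) / (n + 2)) := by
    rw [show zetaNat (n + 2) * x ^ (n + 2) / (n + 2) = x ^ (n + 2) / (n + 2) * zetaNat (n + 2) by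
      ring]
    exact ((hasSum_zetaNat (by omega : 1 < n + 2)).mul_left _).congr_fun fun k => by
      simp only [a, div_pow]
      ring
  have hsum : ∑' p, a p = log (Gamma (1 - x)) - eulerMascheroniConstant * x :=
    (ha.hasSum.prod_fiberwise hrow).unique (hasSum_log_Gamma_one_sub (abs_lt.mp hx).2)
  rw [← hsum]
  exact ((Equiv.prodComm ℕ ℕ).hasSum_iff.mpr ha.hasSum).prod_fiberwise hcol

lemma harmonic_le_self (n : ℕ) : harmonic n ≤ n := by
  calc harmonic n ≤ ∑ _i ∈ range n, (1 : ℚ) :=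
        sum_le_sum fun i _ => inv_le_one_of_one_le₀ (by norm_cast; omega)
    _ = n := by simp

lemma summable_harmonic_mul_zetaNat_mul_pow {x : ℝ} (hx : |x| < 1) :
    Summable fun n : ℕ => (harmonic (n + 2) : ℝ) * (zetaNat (n + 2) * x ^ (n + 2)) := by
  have hgeom : Summable fun n : ℕ => zetaNat 2 * (((n + 2 : ℕ) : ℝ) * |x| ^ (n + 2)) := by
    refine ((summable_nat_add_iff (f := fun n : ℕ => (n : ℝ) * |x| ^ n) 2).mpr ?_).mul_left _
    simpa using summable_pow_mul_geometric_of_norm_lt_one 1 (r := |x|) (by simpa using hx)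
  refine hgeom.of_norm_bounded fun n => ?_
  have hH : (0 : ℝ) ≤ harmonic (n + 2) := by exact_mod_cast (harmonic_pos (by omega)).le
  rw [norm_mul, norm_mul, norm_pow, Real.norm_eq_abs, Real.norm_eq_abs, Real.norm_eq_abs,
    abs_of_nonneg hH, abs_of_nonneg (zetaNat_nonneg _)]
  calc (harmonic (n + 2) : ℝ) * (zetaNat (n + 2) * |x| ^ (n + 2))
      ≤ ((n + 2 : ℕ) : ℝ) * (zetaNat 2 * |x| ^ (n + 2)) := by
        gcongr ?_ * (?_ * _)
        · exact mul_nonneg (zetaNat_nonneg _) (by positivity)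
        · exact_mod_cast harmonic_le_self (n + 2)
        · exact zetaNat_le_of_le one_lt_two (by omega)
    _ = zetaNat 2 * (((n + 2 : ℕ) : ℝ) * |x| ^ (n + 2)) := by ring

theorem hasSum_harmonic_mul_zetaNat_sub {x : ℝ} (hx : |x| < 1) :
    HasSum (fun n : ℕ => (harmonic (n + 2) : ℝ) * (zetaNat (n + 2) - x * zetaNat (n + 3)) *
        x ^ (n + 2))
      (zetaNat 2 * x ^ 2 - eulerMascheroniConstant * x + log (Gamma (1 - x))) := by
  have htail : HasSum (fun n : ℕ => ((harmonic (n + 3) : ℝ) - harmonic (n + 2)) *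
      (zetaNat (n + 3) * x ^ (n + 3)))
      (log (Gamma (1 - x)) - eulerMascheroniConstant * x - zetaNat 2 * x ^ 2 / 2) := by
    have := (hasSum_nat_add_iff' 1).mpr (hasSum_zetaNat_mul_pow_div hx)
    norm_num at this
    refine this.congr_fun fun n => ?_
    rw [harmonic_succ]
    push_cast
    ring
  have hH2 : harmonic 2 = 3 / 2 := by norm_num [harmonic]
  have := (summable_harmonic_mul_zetaNat_mul_pow hx).hasSum.mul_sub_succ htail
  push_cast [zero_add, hH2] at this
  rw [show zetaNat 2 * x ^ 2 - eulerMascheroniConstant * x + log (Gamma (1 - x)) =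
    3 / 2 * (zetaNat 2 * x ^ 2) +
      (log (Gamma (1 - x)) - eulerMascheroniConstant * x - zetaNat 2 * x ^ 2 / 2) by ring]
  exact this.congr_fun fun n => by ring

theorem harmonic_zeta_power_series (x : ℝ) (hx : |x| < 1) :
    ∑' n : ℕ, (harmonic (n + 2) : ℂ) *
        (riemannZeta ((n : ℂ) + 2) - (x : ℂ) * riemannZeta ((n : ℂ) + 3)) * (x : ℂ) ^ (n + 2) =
      riemannZeta 2 * (x : ℂ) ^ 2 - (Real.eulerMascheroniConstant : ℂ) * (x : ℂ) +
        Complex.log (Complex.Gamma (1 - (x : ℂ))) := by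
  have hζ (n : ℕ) : riemannZeta ((n : ℂ) + 2) = zetaNat (n + 2) := by
    exact_mod_cast riemannZeta_natCast (m := n + 2) (by omega)
  have hζ' (n : ℕ) : riemannZeta ((n : ℂ) + 3) = zetaNat (n + 3) := by
    exact_mod_cast riemannZeta_natCast (m := n + 3) (by omega)
  have hζ2 : riemannZeta 2 = zetaNat 2 := by
    exact_mod_cast riemannZeta_natCast one_lt_two
  have hΓ : Complex.log (Complex.Gamma (1 - x)) = log (Gamma (1 - x)) := by
    rw [← Complex.ofReal_one, ← Complex.ofReal_sub, Complex.Gamma_ofReal,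
      Complex.ofReal_log (Gamma_pos_of_pos (by linarith [(abs_lt.mp hx).2])).le]
  simp only [hζ, hζ', hζ2, hΓ]
  exact_mod_cast (hasSum_harmonic_mul_zetaNat_sub hx).tsum_eq
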